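/- Let m : [0,T] → ℝ be non-decreasing and bounded, K : [0,T] → ℝ≥0 measurable with ∫₀ᵀ K(r) dr < ∞, and f nonnegative and bounded on [0,T] satisfying f(t) ≤ m(t) + ∫₀ᵗ K(t−r) f(r) dr for all t ∈ [0,T]. Then there exists a constant λ₀ ≥ 0 (depending only on T and ∫₀ᵀ K) such that f(t) ≤ 2 e^{λ₀ t} m(t) for all t ∈ [0,T]. -/

import Mathlib

/-!
Weight by `exp (-λ t)`. By dominated convergence `λ` can be taken so large that
`∫₀ᵀ exp (-λ s) K s ds ≤ 1/2`. If `S` is the supremum of `exp (-λ r) f r` over `[0, t₀]`,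
the substitution `s = t - r` bounds `exp (-λ t) ∫₀ᵗ K (t - r) f r dr` by
`S ∫₀ᵗ exp (-λ s) K s ds ≤ S / 2`. So the hypothesis and the monotonicity of `m` give
`S ≤ m t₀ + S / 2`, i.e. `S ≤ 2 m t₀`.
-/

open MeasureTheory Set Filter Topology Real

theorem tendsto_setIntegral_exp_neg_mul_atTop {K : ℝ → ℝ} {s : Set ℝ} (hs : MeasurableSet s)
    (hs_pos : s ⊆ Ioi 0) (hK : IntegrableOn K s) :
    Tendsto (fun lam => ∫ x in s, exp (-(lam * x)) * K x) atTop (𝓝 0) := by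
  have hbound : ∀ lam : ℝ, 0 ≤ lam → ∀ x ∈ s, ‖exp (-(lam * x)) * K x‖ ≤ ‖K x‖ := by
    intro lam hlam x hx
    rw [norm_mul, norm_of_nonneg (exp_pos _).le]
    exact mul_le_of_le_one_left (norm_nonneg _)
      (exp_le_one_iff.2 (neg_nonpos.2 (mul_nonneg hlam (hs_pos hx).le)))
  have hlim : ∀ x ∈ s, Tendsto (fun lam => exp (-(lam * x)) * K x) atTop (𝓝 0) :=
    fun x hx => by simpa using ((tendsto_exp_atBot.comp (tendsto_neg_atTop_atBot.comp
      (tendsto_id.atTop_mul_const (hs_pos hx)))).mul_const (K x))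
  simpa using tendsto_integral_filter_of_dominated_convergence (fun x => ‖K x‖)
    (Eventually.of_forall fun lam =>
      (continuous_exp.comp (continuous_const.mul continuous_id).neg).aestronglyMeasurable.mul
        hK.aestronglyMeasurable)
    ((eventually_ge_atTop 0).mono fun lam hlam =>
      (ae_restrict_iff' hs).2 (ae_of_all _ (hbound lam hlam)))
    hK.norm ((ae_restrict_iff' hs).2 (ae_of_all _ hlim))

theorem intervalIntegral_comp_sub_mul_exp (K : ℝ → ℝ) (lam t : ℝ) :
    ∫ r in (0 : ℝ)..t, K (t - r) * exp (lam * r) =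
      exp (lam * t) * ∫ s in (0 : ℝ)..t, exp (-(lam * s)) * K s := by
  have h := intervalIntegral.integral_comp_sub_left (fun s => K s * exp (lam * (t - s))) t
    (a := 0) (b := t)
  simp only [sub_sub_cancel, sub_self, sub_zero] at h
  rw [h, ← intervalIntegral.integral_const_mul]
  congr 1 with s
  rw [mul_sub, sub_eq_add_neg, exp_add]
  ring

theorem exp_neg_mul_intervalIntegral_comp_sub_mul_le {K f : ℝ → ℝ} {t lam S : ℝ}
    (ht : 0 ≤ t) (hK : IntervalIntegrable K volume 0 t) (hK_nonneg : ∀ s ∈ Icc 0 t, 0 ≤ K s)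
    (hf_nonneg : ∀ r ∈ Ioc 0 t, 0 ≤ f r) (hf_le : ∀ r ∈ Ioc 0 t, exp (-(lam * r)) * f r ≤ S) :
    exp (-(lam * t)) * ∫ r in (0 : ℝ)..t, K (t - r) * f r ≤
      S * ∫ s in (0 : ℝ)..t, exp (-(lam * s)) * K s := by
  have hKr : ∀ r ∈ Ioc 0 t, 0 ≤ K (t - r) := fun r hr =>
    hK_nonneg _ ⟨sub_nonneg.2 hr.2, by linarith [hr.1]⟩
  have hK_refl : IntervalIntegrable (fun r => K (t - r)) volume 0 t := by
    simpa using (hK.comp_sub_left t).symm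
  have hf_le_exp : ∀ r ∈ Ioc 0 t, f r ≤ S * exp (lam * r) := fun r hr => by
    have h := hf_le r hr
    rwa [exp_neg, inv_mul_le_iff₀ (exp_pos _), mul_comm] at h
  calc exp (-(lam * t)) * ∫ r in (0 : ℝ)..t, K (t - r) * f r
      ≤ exp (-(lam * t)) * ∫ r in (0 : ℝ)..t, K (t - r) * (S * exp (lam * r)) := by
        gcongr
        rw [intervalIntegral.integral_of_le ht, intervalIntegral.integral_of_le ht]
        -- if `K (t - ·) * f` is not integrable its integral is `0`, so no integrability is needed
        refine setIntegral_mono_of_nonneg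
          (fun r hr => mul_nonneg (hKr r hr) (hf_nonneg r hr))
          (fun r hr => mul_le_mul_of_nonneg_left (hf_le_exp r hr) (hKr r hr)) ?_
        exact (hK_refl.mul_continuousOn (by fun_prop)).1
    _ = S * ∫ s in (0 : ℝ)..t, exp (-(lam * s)) * K s := by
        simp_rw [mul_left_comm _ S, intervalIntegral.integral_const_mul,
          intervalIntegral_comp_sub_mul_exp]
        rw [← mul_assoc, ← mul_assoc, mul_right_comm _ S, ← exp_add, neg_add_cancel, exp_zero,
          one_mul]

theorem intervalIntegral_le_setIntegral_Ioc {F : ℝ → ℝ} {t T : ℝ} (ht : 0 ≤ t) (htT : t ≤ T)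
    (hF_nonneg : ∀ s ∈ Ioc 0 T, 0 ≤ F s) (hF : IntegrableOn F (Ioc 0 T)) :
    ∫ s in (0 : ℝ)..t, F s ≤ ∫ s in Ioc 0 T, F s := by
  rw [intervalIntegral.integral_of_le ht]
  exact setIntegral_mono_set hF ((ae_restrict_iff' measurableSet_Ioc).2 (ae_of_all _ hF_nonneg))
    (Ioc_subset_Ioc_right htT).eventuallyLE

theorem exp_neg_mul_le_of_le_add_convolution {K f : ℝ → ℝ} {t lam S θ M : ℝ}
    (ht : 0 ≤ t) (hlam : 0 ≤ lam) (hK : IntervalIntegrable K volume 0 t)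
    (hK_nonneg : ∀ s ∈ Icc 0 t, 0 ≤ K s)
    (hf_nonneg : ∀ r ∈ Ioc 0 t, 0 ≤ f r) (hf_le : ∀ r ∈ Ioc 0 t, exp (-(lam * r)) * f r ≤ S)
    (hS : 0 ≤ S) (hJ : ∫ s in (0 : ℝ)..t, exp (-(lam * s)) * K s ≤ θ) (hM : 0 ≤ M)
    (hineq : f t ≤ M + ∫ r in (0 : ℝ)..t, K (t - r) * f r) :
    exp (-(lam * t)) * f t ≤ M + θ * S :=
  calc exp (-(lam * t)) * f t
      ≤ exp (-(lam * t)) * M + exp (-(lam * t)) * ∫ r in (0 : ℝ)..t, K (t - r) * f r := by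
        rw [← mul_add]
        exact mul_le_mul_of_nonneg_left hineq (exp_pos _).le
    _ ≤ M + θ * S := by
        refine add_le_add (mul_le_of_le_one_left hM ?_) ?_
        · exact exp_le_one_iff.2 (neg_nonpos.2 (mul_nonneg hlam ht))
        · calc _ ≤ S * ∫ s in (0 : ℝ)..t, exp (-(lam * s)) * K s :=
                exp_neg_mul_intervalIntegral_comp_sub_mul_le ht hK hK_nonneg hf_nonneg hf_le
            _ ≤ θ * S := by rw [mul_comm]; exact mul_le_mul_of_nonneg_right hJ hS

theorem mul_le_of_le_add_mul_sSup {α : Type*} {g : α → ℝ} {A : Set α} {a θ : ℝ}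
    (hbdd : BddAbove (g '' A)) (hθ : θ < 1) (h : ∀ t ∈ A, g t ≤ a + θ * sSup (g '' A))
    {t : α} (ht : t ∈ A) : (1 - θ) * g t ≤ a := by
  have hS : sSup (g '' A) ≤ a + θ * sSup (g '' A) :=
    csSup_le ⟨g t, mem_image_of_mem g ht⟩ (forall_mem_image.2 h)
  have hgt : g t ≤ sSup (g '' A) := le_csSup hbdd (mem_image_of_mem g ht)
  nlinarith

theorem mul_le_exp_mul_of_le_add_convolution {T lam θ : ℝ} {m K f : ℝ → ℝ}
    (hm_mono : MonotoneOn m (Icc 0 T)) (hK_nonneg : ∀ t ∈ Icc 0 T, 0 ≤ K t)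
    (hK_int : IntegrableOn K (Ioc 0 T)) (hf_nonneg : ∀ t ∈ Icc 0 T, 0 ≤ f t)
    (hf_bdd : BddAbove (f '' Icc 0 T))
    (hineq : ∀ t ∈ Icc 0 T, f t ≤ m t + ∫ r in (0 : ℝ)..t, K (t - r) * f r)
    (hlam : 0 ≤ lam) (hθ : θ < 1) (hJ : ∫ s in Ioc 0 T, exp (-(lam * s)) * K s ≤ θ)
    {t₀ : ℝ} (ht₀ : t₀ ∈ Icc 0 T) : (1 - θ) * f t₀ ≤ exp (lam * t₀) * m t₀ := by
  have hT : 0 ≤ T := ht₀.1.trans ht₀.2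
  have hsub : Icc 0 t₀ ⊆ Icc 0 T := Icc_subset_Icc_right ht₀.2
  have hK_ii : IntervalIntegrable K volume 0 T :=
    (intervalIntegrable_iff_integrableOn_Ioc_of_le hT).2 hK_int
  have hm_nonneg : 0 ≤ m 0 := by
    have h0 := hineq 0 (left_mem_Icc.2 hT)
    rw [intervalIntegral.integral_same, add_zero] at h0
    exact (hf_nonneg 0 (left_mem_Icc.2 hT)).trans h0
  set g : ℝ → ℝ := fun r => exp (-(lam * r)) * f r with hg
  have hbdd : BddAbove (g '' Icc 0 t₀) := by
    obtain ⟨B, hB⟩ := hf_bdd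
    refine ⟨B, forall_mem_image.2 fun r hr => ?_⟩
    refine (mul_le_of_le_one_left (hf_nonneg r (hsub hr)) ?_).trans
      (hB (mem_image_of_mem f (hsub hr)))
    exact exp_le_one_iff.2 (neg_nonpos.2 (mul_nonneg hlam hr.1))
  have key : ∀ t ∈ Icc 0 t₀, g t ≤ m t₀ + θ * sSup (g '' Icc 0 t₀) := by
    intro t ht
    have htT := hsub ht
    have hJt : ∫ s in (0 : ℝ)..t, exp (-(lam * s)) * K s ≤ θ :=
      (intervalIntegral_le_setIntegral_Ioc ht.1 htT.2
        (fun s hs => mul_nonneg (exp_pos _).le (hK_nonneg s (Ioc_subset_Icc_self hs)))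
        (hK_ii.continuousOn_mul (by fun_prop)).1).trans hJ
    refine exp_neg_mul_le_of_le_add_convolution ht.1 hlam
      (hK_ii.mono_set (by
        rw [uIcc_of_le ht.1, uIcc_of_le hT]; exact (Icc_subset_Icc_right ht.2).trans hsub))
      (fun s hs => hK_nonneg s (hsub ⟨hs.1, hs.2.trans ht.2⟩))
      (fun r hr => hf_nonneg r (hsub ⟨hr.1.le, hr.2.trans ht.2⟩))
      (fun r hr => le_csSup hbdd (mem_image_of_mem g ⟨hr.1.le, hr.2.trans ht.2⟩))
      ((mul_nonneg (exp_pos _).le (hf_nonneg t htT)).trans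
        (le_csSup hbdd (mem_image_of_mem g ht)))
      hJt (hm_nonneg.trans (hm_mono (left_mem_Icc.2 hT) ht₀ ht₀.1))
      ((hineq t htT).trans (by gcongr; exact hm_mono htT ht₀ ht.2))
  calc (1 - θ) * f t₀ = exp (lam * t₀) * ((1 - θ) * g t₀) := by
        simp only [hg, exp_neg]
        field_simp
    _ ≤ exp (lam * t₀) * m t₀ :=
        mul_le_mul_of_nonneg_left (mul_le_of_le_add_mul_sSup hbdd hθ key (right_mem_Icc.2 ht₀.1))
          (exp_pos _).le

theorem gronwall_singular_kernel_general (T : ℝ) (m K f : ℝ → ℝ)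
    (hm_mono : MonotoneOn m (Icc 0 T))
    (hK_nonneg : ∀ t ∈ Icc 0 T, 0 ≤ K t)
    (hK_int : IntegrableOn K (Ioc 0 T))
    (hf_nonneg : ∀ t ∈ Icc 0 T, 0 ≤ f t)
    (hf_bdd : ∃ B : ℝ, ∀ t ∈ Icc 0 T, f t ≤ B)
    (hineq : ∀ t ∈ Icc 0 T, f t ≤ m t + ∫ r in (0:ℝ)..t, K (t - r) * f r) :
    ∃ lam ≥ (0:ℝ), ∀ t ∈ Icc 0 T, f t ≤ 2 * Real.exp (lam * t) * m t := by
  obtain ⟨B, hB⟩ := hf_bdd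
  obtain ⟨lam, hJ, hlam⟩ := (((tendsto_setIntegral_exp_neg_mul_atTop measurableSet_Ioc
    Ioc_subset_Ioi_self hK_int).eventually (gt_mem_nhds one_half_pos)).and
    (eventually_ge_atTop 0)).exists
  refine ⟨lam, hlam, fun t ht => ?_⟩
  have h := mul_le_exp_mul_of_le_add_convolution hm_mono hK_nonneg hK_int hf_nonneg
    ⟨B, forall_mem_image.2 hB⟩ hineq hlam (by norm_num) hJ.le ht
  linarith

/-- Grönwall inequality with a singular integrable convolution kernel. -/
theorem gronwall_singular_kernel (T : ℝ) (hT : 0 < T) (m K f : ℝ → ℝ)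
    (hm_mono : MonotoneOn m (Icc 0 T))
    (hm_bdd : ∃ B : ℝ, ∀ t ∈ Icc 0 T, |m t| ≤ B)
    (hK_meas : Measurable K)
    (hK_nonneg : ∀ t ∈ Icc 0 T, 0 ≤ K t)
    (hK_int : IntegrableOn K (Ioc 0 T))
    (hf_nonneg : ∀ t ∈ Icc 0 T, 0 ≤ f t)
    (hf_bdd : ∃ B : ℝ, ∀ t ∈ Icc 0 T, f t ≤ B)
    (hineq : ∀ t ∈ Icc 0 T, f t ≤ m t + ∫ r in (0:ℝ)..t, K (t - r) * f r) :
    ∃ lam ≥ (0:ℝ), ∀ t ∈ Icc 0 T, f t ≤ 2 * Real.exp (lam * t) * m t :=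
  gronwall_singular_kernel_general T m K f hm_mono hK_nonneg hK_int hf_nonneg hf_bdd hineq
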